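/- arXiv:math/9905093 — 2 statements merged into one kernel-verified Lean document; each statement's English description precedes it below -/
import Mathlib

section
/- For every f ∈ A₀ and every integer l there exists a unique A₀-function F̃ such that F̃(n) = Σ_{i=0}^{n-1} f(i) q^{il} for every positive integer n. (Proposition 3.2: interpolation of partial sums.) -/
/-!
Multiplication by `q ^ (l * w)` preserves `A₀`, so the partial sums are `F n - F 0` for any
`F ∈ A₀` with `F (w + 1) - F w = f w * q ^ (l * w)`. Such an `F` exists because the forward
difference is triangular on `w ^ j * q ^ (k * w)`, `j ≤ m`, with diagonal entry `q ^ k - 1`;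
when `q ^ k = 1` one differences `w ^ (m + 1) * q ^ (k * w)` instead, whose leading term is
`(m + 1) * w ^ m * q ^ (k * w)`.

For uniqueness, write an element of `A₀` as `∑ₖ Pₖ(w) q ^ (k * w)` with polynomials `Pₖ`. The
moduli `‖q‖ ^ k` are distinct, so if it vanishes at all large integers `n`, dividing by the
dominant `q ^ (k * n)` with `Pₖ ≠ 0` gives `Pₖ(n) → 0`, which forces `Pₖ = 0`.
-/

/-- `f` belongs to the algebra `A₀` of entire functions spanned by
`w ↦ w^m * q^(n*w)` for `m ∈ ℕ`, `n ∈ ℤ`, where `q^w = exp (w * Log q)`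
with the principal branch of the logarithm. -/
def IsA0 (q : ℂ) (f : ℂ → ℂ) : Prop :=
  ∃ (s : Finset (ℕ × ℤ)) (c : ℕ × ℤ → ℂ),
    ∀ w : ℂ, f w = ∑ p ∈ s, c p * w ^ p.1 * Complex.exp ((p.2 : ℂ) * Complex.log q * w)

open Complex Filter Finset Polynomial Topology fwdDiff

def fwdDiffLinearMap (R : Type*) {M G : Type*} [AddCommMonoid M] [AddCommGroup G] [Semiring R]
    [Module R G] (h : M) : (M → G) →ₗ[R] (M → G) where
  toFun := fwdDiff h
  map_add' := fwdDiff_add h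
  map_smul' := fwdDiff_const_smul h

section Polynomial

variable {𝕜 : Type*} [RCLike 𝕜]

theorem Polynomial.eq_zero_of_tendsto_eval_natCast {P : 𝕜[X]}
    (h : Tendsto (fun n : ℕ => P.eval (n : 𝕜)) atTop (𝓝 0)) : P = 0 := by
  by_cases hdeg : 0 < P.degree
  · have hnorm : Tendsto (fun n : ℕ => ‖(n : 𝕜)‖) atTop atTop := by
      simpa only [RCLike.norm_natCast] using tendsto_natCast_atTop_atTop
    exact absurd (tendsto_norm_zero.comp h)
      (not_tendsto_nhds_of_tendsto_atTop (P.tendsto_norm_atTop hdeg hnorm) 0)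
  · rw [eq_C_of_degree_le_zero (not_lt.mp hdeg)] at h ⊢
    simpa using h

theorem Polynomial.tendsto_eval_natCast_mul_pow (P : 𝕜[X]) {r : 𝕜} (hr : ‖r‖ < 1) :
    Tendsto (fun n : ℕ => P.eval (n : 𝕜) * r ^ n) atTop (𝓝 0) := by
  have hmon (i : ℕ) : Tendsto (fun n : ℕ => (n : 𝕜) ^ i * r ^ n) atTop (𝓝 0) :=
    tendsto_zero_iff_norm_tendsto_zero.mpr
      (summable_norm_pow_mul_geometric_of_norm_lt_one i hr).tendsto_atTop_zero
  simpa [eval_eq_sum_range, Finset.sum_mul, mul_assoc] using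
    tendsto_finsetSum (range (P.natDegree + 1)) fun i _ => (hmon i).const_mul (P.coeff i)

theorem eq_zero_of_eventually_sum_eval_mul_pow_eq_zero {ι : Type*} {t : Finset ι} {r : ι → 𝕜}
    {P : ι → 𝕜[X]} (hr0 : ∀ k ∈ t, r k ≠ 0) (hr : Set.InjOn (‖r ·‖) t)
    (h : ∀ᶠ n : ℕ in atTop, ∑ k ∈ t, (P k).eval (n : 𝕜) * r k ^ n = 0) :
    ∀ k ∈ t, P k = 0 := by
  classical
  by_contra! hP
  set t' := t.filter (P · ≠ 0)
  have ht' : t' ⊆ t := filter_subset _ _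
  obtain ⟨k₀, hk₀, hmax⟩ := t'.exists_max_image (‖r ·‖) (by simpa [t', Finset.Nonempty] using hP)
  have hrk₀ : r k₀ ≠ 0 := hr0 k₀ (ht' hk₀)
  have hratio : ∀ k ∈ t'.erase k₀, ‖r k / r k₀‖ < 1 := fun k hk => by
    obtain ⟨hne, hk⟩ := mem_erase.mp hk
    rw [norm_div, div_lt_one (norm_pos_iff.mpr hrk₀)]
    exact (hmax k hk).lt_of_ne fun h => hne (hr (ht' hk) (ht' hk₀) h)
  have hlead : ∀ᶠ n : ℕ in atTop, (P k₀).eval (n : 𝕜) =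
      -∑ k ∈ t'.erase k₀, (P k).eval (n : 𝕜) * (r k / r k₀) ^ n := by
    filter_upwards [h] with n hn
    rw [← sum_filter_of_ne (p := (P · ≠ 0)) fun k _ hk h0 => hk (by simp [h0]),
      ← add_sum_erase _ _ hk₀] at hn
    have hpow : r k₀ ^ n ≠ 0 := pow_ne_zero n hrk₀
    calc (P k₀).eval (n : 𝕜) = (P k₀).eval (n : 𝕜) * r k₀ ^ n / r k₀ ^ n :=
          (mul_div_cancel_right₀ _ hpow).symm
      _ = _ := by
          rw [eq_neg_of_add_eq_zero_left hn, neg_div, sum_div]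
          simp_rw [div_pow, mul_div_assoc]
  have htend : Tendsto (fun n : ℕ => (P k₀).eval (n : 𝕜)) atTop (𝓝 0) := by
    refine Tendsto.congr' (EventuallyEq.symm hlead) ?_
    simpa using (tendsto_finsetSum _ fun k hk =>
      (P k).tendsto_eval_natCast_mul_pow (hratio k hk)).neg
  exact (mem_filter.mp hk₀).2 (eq_zero_of_tendsto_eval_natCast htend)

end Polynomial

noncomputable def qMonomial (q : ℂ) (m : ℕ) (k : ℤ) (w : ℂ) : ℂ := w ^ m * exp (k * log q * w)

def A0 (q : ℂ) : Submodule ℂ (ℂ → ℂ) :=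
  Submodule.span ℂ (Set.range fun p : ℕ × ℤ => qMonomial q p.1 p.2)

section A0

variable {q : ℂ}

theorem qMonomial_mem_A0 (m : ℕ) (k : ℤ) : qMonomial q m k ∈ A0 q :=
  Submodule.subset_span ⟨(m, k), rfl⟩

theorem isA0_iff_mem_A0 {f : ℂ → ℂ} : IsA0 q f ↔ f ∈ A0 q := by
  constructor
  · rintro ⟨s, c, hc⟩
    have hf : f = ∑ p ∈ s, c p • qMonomial q p.1 p.2 := by
      funext w
      simp [hc, qMonomial, Finset.sum_apply, mul_assoc]
    rw [hf]
    exact Submodule.sum_mem _ fun p _ => Submodule.smul_mem _ _ (qMonomial_mem_A0 p.1 p.2)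
  · intro hf
    obtain ⟨c, rfl⟩ := Finsupp.mem_span_range_iff_exists_finsupp.mp hf
    exact ⟨c.support, c, fun w => by simp [Finsupp.sum, qMonomial, Finset.sum_apply, mul_assoc]⟩

theorem const_mem_A0 (a : ℂ) : (fun _ => a) ∈ A0 q := by
  convert Submodule.smul_mem _ a (qMonomial_mem_A0 (q := q) 0 0) using 1
  funext w
  simp [qMonomial]

theorem mul_exp_mem_A0 (l : ℤ) {f : ℂ → ℂ} (hf : f ∈ A0 q) :
    (fun w => f w * exp (l * log q * w)) ∈ A0 q := by
  suffices A0 q ≤ (A0 q).comap (LinearMap.mulRight ℂ fun w => exp (l * log q * w)) from this hf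
  refine Submodule.span_le.mpr (Set.range_subset_iff.mpr fun p => ?_)
  rw [SetLike.mem_coe, Submodule.mem_comap]
  convert qMonomial_mem_A0 (q := q) p.1 (p.2 + l) using 1
  funext w
  simp only [LinearMap.mulRight_apply, Pi.mul_apply, qMonomial, mul_assoc, ← exp_add]
  push_cast
  ring_nf

theorem fwdDiff_qMonomial (q : ℂ) (M : ℕ) (k : ℤ) :
    Δ_[1] (qMonomial q M k) = ∑ j ∈ range M, (M.choose j * exp (k * log q)) • qMonomial q j k
      + (exp (k * log q) - 1) • qMonomial q M k := by
  funext w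
  simp only [fwdDiff, qMonomial, Pi.add_apply, Finset.sum_apply, Pi.smul_apply, smul_eq_mul,
    add_pow, one_pow, mul_one, sum_range_succ, Nat.choose_self, mul_add, exp_add]
  set x := exp (k * log q)
  set e := exp (k * log q * w)
  have hterm (j : ℕ) : w ^ j * (M.choose j : ℂ) * (e * x) = M.choose j * x * (w ^ j * e) := by
    ring
  simp only [add_mul, sum_mul, Nat.cast_one, hterm]
  ring

theorem qMonomial_mem_map_fwdDiff (m : ℕ) (k : ℤ) :
    qMonomial q m k ∈ (A0 q).map (fwdDiffLinearMap ℂ (1 : ℂ)) := by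
  induction m using Nat.strong_induction_on with
  | _ m ih =>
  set S := (A0 q).map (fwdDiffLinearMap ℂ (1 : ℂ))
  have hΔ (M : ℕ) : Δ_[1] (qMonomial q M k) ∈ S :=
    Submodule.mem_map_of_mem (qMonomial_mem_A0 M k)
  have hlow (a : ℕ → ℂ) : ∑ j ∈ range m, a j • qMonomial q j k ∈ S :=
    Submodule.sum_mem _ fun j hj => Submodule.smul_mem _ _ (ih j (mem_range.mp hj))
  by_cases hx : exp (k * log q) = 1
  · have hsmul : ((m + 1 : ℕ) : ℂ) • qMonomial q m k ∈ S := by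
      have h := fwdDiff_qMonomial q (m + 1) k
      simp only [hx, mul_one, sub_self, zero_smul, add_zero, sum_range_succ,
        Nat.choose_succ_self_right] at h
      have hdiff := sub_mem (hΔ (m + 1)) (hlow fun j => ((m + 1).choose j : ℂ))
      rwa [h, add_sub_cancel_left] at hdiff
    exact (Submodule.smul_mem_iff _ (Nat.cast_ne_zero.mpr m.succ_ne_zero)).mp hsmul
  · have hsmul : (exp (k * log q) - 1) • qMonomial q m k ∈ S := by
      have hdiff := sub_mem (hΔ m) (hlow fun j => m.choose j * exp (k * log q))
      rwa [fwdDiff_qMonomial, add_sub_cancel_left] at hdiff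
    exact (Submodule.smul_mem_iff _ (sub_ne_zero.mpr hx)).mp hsmul

theorem exists_fwdDiff_eq_of_mem_A0 {g : ℂ → ℂ} (hg : g ∈ A0 q) :
    ∃ F ∈ A0 q, Δ_[1] F = g := by
  have hle : A0 q ≤ (A0 q).map (fwdDiffLinearMap ℂ (1 : ℂ)) :=
    Submodule.span_le.mpr (Set.range_subset_iff.mpr fun p => qMonomial_mem_map_fwdDiff p.1 p.2)
  exact Submodule.mem_map.mp (hle hg)

theorem exp_intCast_mul_log_mul_natCast (hq : q ≠ 0) (k : ℤ) (n : ℕ) :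
    exp (k * log q * n) = (q ^ k) ^ n := by
  rw [mul_comm, exp_nat_mul, exp_int_mul, exp_log hq]

theorem exists_polynomial_expansion_of_mem_A0 {f : ℂ → ℂ} (hf : f ∈ A0 q) :
    ∃ (t : Finset ℤ) (P : ℤ → ℂ[X]), ∀ w, f w = ∑ k ∈ t, (P k).eval w * exp (k * log q * w) := by
  classical
  obtain ⟨s, c, hc⟩ := isA0_iff_mem_A0.mpr hf
  refine ⟨s.image Prod.snd, fun k => ∑ p ∈ s with p.2 = k, C (c p) * X ^ p.1, fun w => ?_⟩
  rw [hc, ← sum_fiberwise_of_maps_to fun p hp => mem_image_of_mem Prod.snd hp]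
  refine sum_congr rfl fun k _ => ?_
  simp only [eval_finsetSum, eval_mul, eval_C, eval_pow, eval_X, sum_mul]
  exact sum_congr rfl fun p hp => by rw [(mem_filter.mp hp).2]

theorem eq_zero_of_mem_A0_of_eventually_natCast_eq_zero (hq0 : q ≠ 0) (hq1 : ‖q‖ ≠ 1)
    {f : ℂ → ℂ} (hf : f ∈ A0 q) (h : ∀ᶠ n : ℕ in atTop, f n = 0) : f = 0 := by
  obtain ⟨t, P, hP⟩ := exists_polynomial_expansion_of_mem_A0 hf
  have hinj : Set.InjOn (fun k : ℤ => ‖q ^ k‖) t := fun k _ j _ hkj =>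
    zpow_right_injective₀ (norm_pos_iff.mpr hq0) hq1 (by simpa only [norm_zpow] using hkj)
  have hP0 := eq_zero_of_eventually_sum_eval_mul_pow_eq_zero (fun k _ => zpow_ne_zero k hq0) hinj
    (by filter_upwards [h] with n hn; simpa [hP, exp_intCast_mul_log_mul_natCast hq0] using hn)
  funext w
  rw [hP w, Pi.zero_apply]
  exact sum_eq_zero fun k hk => by simp [hP0 k hk]

end A0

/-- Proposition 3.2: for every `f ∈ A₀` and every integer `l` there exists a unique
`A₀`-function `F` interpolating the partial sums `n ↦ ∑_{i=0}^{n-1} f(i) q^(i*l)`. -/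
theorem A0_sum_interpolation (q : ℂ) (hq0 : 0 < ‖q‖) (hq1 : ‖q‖ < 1)
    (f : ℂ → ℂ) (hf : IsA0 q f) (l : ℤ) :
    ∃ F : ℂ → ℂ, IsA0 q F ∧
      (∀ n : ℕ, 0 < n → F (n : ℂ) = ∑ i ∈ Finset.range n, f (i : ℂ) * q ^ ((i : ℤ) * l)) ∧
      ∀ G : ℂ → ℂ, IsA0 q G →
        (∀ n : ℕ, 0 < n → G (n : ℂ) = ∑ i ∈ Finset.range n, f (i : ℂ) * q ^ ((i : ℤ) * l)) →
        G = F := by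
  have hq : q ≠ 0 := norm_pos_iff.mp hq0
  obtain ⟨F, hF, hΔF⟩ := exists_fwdDiff_eq_of_mem_A0 (mul_exp_mem_A0 l (isA0_iff_mem_A0.mp hf))
  have hsum (n : ℕ) : F n - F 0 = ∑ i ∈ range n, f i * q ^ ((i : ℤ) * l) := by
    rw [← Nat.cast_zero, ← sum_range_sub fun i : ℕ => F i]
    refine sum_congr rfl fun i _ => ?_
    rw [Nat.cast_succ, mul_comm (i : ℤ), zpow_mul, zpow_natCast,
      ← exp_intCast_mul_log_mul_natCast hq]
    exact congrFun hΔF i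
  have hF₀ : F - (fun _ => F 0) ∈ A0 q := sub_mem hF (const_mem_A0 _)
  refine ⟨F - fun _ => F 0, isA0_iff_mem_A0.mpr hF₀, fun n _ => hsum n, fun G hG hGn => ?_⟩
  refine sub_eq_zero.mp (eq_zero_of_mem_A0_of_eventually_natCast_eq_zero hq hq1.ne
    (sub_mem (isA0_iff_mem_A0.mp hG) hF₀) ?_)
  filter_upwards [eventually_gt_atTop 0] with n hn
  simp [hGn n hn, hsum n]
end

section
/- Let n ≥ 1 and q ∈ ℂ with 0 < |q| < 1. For F = (F_0,…,F_{n−1}) ∈ H_n define u(z) = (1/n) Σ_{i=0}^{n−1} F_i(q^i z) and P F = (u(z), u(q⁻¹z),…,u(q^{−(n−1)}z)). Then P F ∈ U_n, P F = F whenever F ∈ U_n, and ⟨F − P F, Ū⟩ = 0 for every Ū ∈ U_n; i.e. P is the orthogonal projection of H_n onto U_n. (Lemma 2.15.) -/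
noncomputable section

/-- Dilation operator: `(dil q k a)(z) = a(q^k z)`.
A formal Laurent series `a(z) = ∑_{m ≤ N} a_m z^m ∈ ℂ((z⁻¹))` is encoded as the
Hahn series `F : LaurentSeries ℂ` with `F.coeff j = a_{-j}` (support bounded below,
i.e. finitely many positive powers of `z`); dilation sends `a_m ↦ q^{k m} a_m`,
i.e. `coeff j ↦ q^{-(k j)} * coeff j`. -/
def dil (q : ℂ) (k : ℤ) (F : LaurentSeries ℂ) : LaurentSeries ℂ where
  coeff := fun j => q ^ (-(k * j)) * F.coeff j
  isPWO_support' := by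
    apply F.isPWO_support'.mono
    intro j hj
    simp only [Function.mem_support] at hj ⊢
    intro h
    exact hj (by rw [h, mul_zero])

/-- `Res a = a₀`, the coefficient of `z⁰`. -/
def Res (F : LaurentSeries ℂ) : ℂ := F.coeff 0

/-- The bilinear pairing `⟨F, G⟩ = ∑_j Res (F_j G_j)` on `H_n = (ℂ((z⁻¹)))^n`. -/
def pair {n : ℕ} (F G : Fin n → LaurentSeries ℂ) : ℂ := ∑ j, Res (F j * G j)

/-- The operator `ĥτ̂_n` on `H_n`: `(ĥτ̂_n F)_j (z) = F_{j+1 mod n} (q z)`. -/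
def htau (q : ℂ) {n : ℕ} [NeZero n] (F : Fin n → LaurentSeries ℂ) :
    Fin n → LaurentSeries ℂ := fun j => dil q 1 (F (j + 1))

/-- `F ∈ U_n`, i.e. `F = (u(z), u(q⁻¹ z), …, u(q^{-(n-1)} z))` for some `u ∈ ℂ((z⁻¹))`. -/
def InU (q : ℂ) {n : ℕ} (F : Fin n → LaurentSeries ℂ) : Prop :=
  ∃ u : LaurentSeries ℂ, ∀ j : Fin n, F j = dil q (-((j : ℕ) : ℤ)) u

end

/-! Dilation `dil q k` is multiplicative (for `q ≠ 0`) and preserves the residue, so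
`Res (a(z) b(q⁻ᵏ z)) = Res (a(qᵏ z) b(z))`. Pairing `G` with the element of `U_n` generated by `v`
therefore gives `Res ((∑ⱼ G_j(qʲ z)) v(z))`. For `G = F - P F` the inner sum vanishes, since
`F` and `P F` both have the sum `n u`; and if `F ∈ U_n` is generated by `v`, its sum is `n v`,
whence `u = v` and `P F = F`. -/

theorem HahnSeries.coeff_mul_of_support_subset {Γ R : Type*} [AddCommMonoid Γ] [PartialOrder Γ]
    [IsOrderedCancelAddMonoid Γ] [NonUnitalNonAssocSemiring R] {x y : HahnSeries Γ R}
    {s t : Set Γ} (hs : s.IsPWO) (ht : t.IsPWO) (hxs : x.support ⊆ s) (hyt : y.support ⊆ t)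
    (a : Γ) :
    (x * y).coeff a = ∑ ij ∈ Finset.antidiagonal hs ht a, x.coeff ij.1 * y.coeff ij.2 := by
  rw [HahnSeries.coeff_mul]
  refine Finset.sum_subset
    ((Finset.antidiagonal_mono_left hxs).trans (Finset.antidiagonal_mono_right hyt)) ?_
  intro ij hij hxy
  rw [Finset.mem_antidiagonal] at hij hxy
  by_cases hx : x.coeff ij.1 = 0
  · rw [hx, zero_mul]
  by_cases hy : y.coeff ij.2 = 0
  · rw [hy, mul_zero]
  exact absurd ⟨hx, hy, hij.2.2⟩ hxy

@[simp] theorem dil_coeff (q : ℂ) (k : ℤ) (F : LaurentSeries ℂ) (j : ℤ) :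
    (dil q k F).coeff j = q ^ (-(k * j)) * F.coeff j := rfl

theorem support_dil_subset (q : ℂ) (k : ℤ) (F : LaurentSeries ℂ) :
    (dil q k F).support ⊆ F.support :=
  fun j hj hF => hj (by rw [dil_coeff, hF, mul_zero])

theorem dil_zero (q : ℂ) (F : LaurentSeries ℂ) : dil q 0 F = F := by
  ext j
  simp

theorem dil_dil {q : ℂ} (hq : q ≠ 0) (k l : ℤ) (F : LaurentSeries ℂ) :
    dil q k (dil q l F) = dil q (k + l) F := by
  ext j
  rw [dil_coeff, dil_coeff, dil_coeff, ← mul_assoc, ← zpow_add₀ hq]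
  ring_nf

theorem dil_sub (q : ℂ) (k : ℤ) (F G : LaurentSeries ℂ) :
    dil q k (F - G) = dil q k F - dil q k G := by
  ext j
  simp [mul_sub]

theorem dil_mul {q : ℂ} (hq : q ≠ 0) (k : ℤ) (F G : LaurentSeries ℂ) :
    dil q k (F * G) = dil q k F * dil q k G := by
  ext m
  rw [HahnSeries.coeff_mul_of_support_subset F.isPWO_support G.isPWO_support
      (support_dil_subset q k F) (support_dil_subset q k G),
    dil_coeff, HahnSeries.coeff_mul, Finset.mul_sum]
  refine Finset.sum_congr rfl fun ij hij => ?_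
  have hm : q ^ (-(k * m)) = q ^ (-(k * ij.1)) * q ^ (-(k * ij.2)) := by
    rw [← zpow_add₀ hq, ← (Finset.mem_antidiagonal.mp hij).2.2]
    ring_nf
  rw [dil_coeff, dil_coeff, hm]
  ring

theorem res_dil (q : ℂ) (k : ℤ) (F : LaurentSeries ℂ) : Res (dil q k F) = Res F := by
  simp [Res]

theorem res_mul_dil {q : ℂ} (hq : q ≠ 0) (k : ℤ) (F G : LaurentSeries ℂ) :
    Res (F * dil q k G) = Res (dil q (-k) F * G) := by
  rw [← res_dil q (-k), dil_mul hq, dil_dil hq, neg_add_cancel, dil_zero]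

theorem sum_dil_of_eq_dil {q : ℂ} (hq : q ≠ 0) {n : ℕ} {G : Fin n → LaurentSeries ℂ}
    {v : LaurentSeries ℂ} (hG : ∀ j : Fin n, G j = dil q (-((j : ℕ) : ℤ)) v) :
    ∑ j : Fin n, dil q ((j : ℕ) : ℤ) (G j) = (n : ℂ) • v := by
  simp only [hG, dil_dil hq, add_neg_cancel, dil_zero, Finset.sum_const, Finset.card_univ,
    Fintype.card_fin]
  exact (Nat.cast_smul_eq_nsmul ℂ n v).symm

theorem pair_eq_res_sum_dil_mul {q : ℂ} (hq : q ≠ 0) {n : ℕ} (G : Fin n → LaurentSeries ℂ)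
    {U : Fin n → LaurentSeries ℂ} {v : LaurentSeries ℂ}
    (hU : ∀ j : Fin n, U j = dil q (-((j : ℕ) : ℤ)) v) :
    pair G U = Res ((∑ j : Fin n, dil q ((j : ℕ) : ℤ) (G j)) * v) := by
  simp only [pair, hU, res_mul_dil hq, neg_neg, Finset.sum_mul]
  exact (HahnSeries.coeff_sum 0).symm

theorem orthogonal_projection_onto_Un_general (n : ℕ) [NeZero n] (q : ℂ)
    (hq0 : 0 < ‖q‖)
    (F : Fin n → LaurentSeries ℂ)
    (u : LaurentSeries ℂ)
    (hu : u = (n : ℂ)⁻¹ • ∑ i : Fin n, dil q ((i : ℕ) : ℤ) (F i))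
    (P : Fin n → LaurentSeries ℂ)
    (hP : ∀ j : Fin n, P j = dil q (-((j : ℕ) : ℤ)) u) :
    InU q P ∧ (InU q F → P = F) ∧
      ∀ Ubar : Fin n → LaurentSeries ℂ, InU q Ubar →
        pair (fun j => F j - P j) Ubar = 0 := by
  have hq : q ≠ 0 := norm_pos_iff.mp hq0
  have hn : (n : ℂ) ≠ 0 := NeZero.ne _
  have hF : ∑ j : Fin n, dil q ((j : ℕ) : ℤ) (F j) = (n : ℂ) • u := by
    rw [hu, smul_inv_smul₀ hn]
  refine ⟨⟨u, hP⟩, ?_, ?_⟩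
  · rintro ⟨v, hv⟩
    have huv : u = v := by rw [hu, sum_dil_of_eq_dil hq hv, inv_smul_smul₀ hn]
    funext j
    rw [hP j, hv j, huv]
  · rintro Ubar ⟨v, hv⟩
    rw [pair_eq_res_sum_dil_mul hq _ hv]
    simp only [dil_sub, Finset.sum_sub_distrib, hF, sum_dil_of_eq_dil hq hP, sub_self, zero_mul]
    exact HahnSeries.coeff_zero

/-- Lemma 2.15: the map `F ↦ P F`, where `(P F)_j (z) = u(q^{-j} z)` with
`u(z) = (1/n) ∑_{i=0}^{n-1} F_i(q^i z)`, is the orthogonal projection of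
`H_n` onto `U_n`: `P F ∈ U_n`, `P F = F` for `F ∈ U_n`, and `F − P F ⟂ U_n`. -/
theorem orthogonal_projection_onto_Un (n : ℕ) [NeZero n] (q : ℂ)
    (hq0 : 0 < ‖q‖) (hq1 : ‖q‖ < 1)
    (F : Fin n → LaurentSeries ℂ)
    (u : LaurentSeries ℂ)
    (hu : u = (n : ℂ)⁻¹ • ∑ i : Fin n, dil q ((i : ℕ) : ℤ) (F i))
    (P : Fin n → LaurentSeries ℂ)
    (hP : ∀ j : Fin n, P j = dil q (-((j : ℕ) : ℤ)) u) :
    InU q P ∧ (InU q F → P = F) ∧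
      ∀ Ubar : Fin n → LaurentSeries ℂ, InU q Ubar →
        pair (fun j => F j - P j) Ubar = 0 :=
  orthogonal_projection_onto_Un_general n q hq0 F u hu P hP
end
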